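/- arXiv:1605.05499 — 3 statements merged into one kernel-verified Lean document; each statement's English description precedes it below -/
import Mathlib

section
/- For every n ≥ 1 and every n-element set U, the connectivity matrix A_n, indexed by Γ(U) with (A,B)-entry equal to 1 if |A∧B| = 1 and 0 otherwise, is invertible. -/
attribute [local instance] Classical.propDecidable

/-- A multigraph: a finite vertex type, a finite edge index type, and an endpoint
map sending each edge to an unordered pair of vertices. -/
structure Multigraph where
  V : Type
  E : Type
  [finV : Fintype V]
  [finE : Fintype E]
  ends : E → Sym2 V

attribute [instance] Multigraph.finV Multigraph.finE

namespace Multigraph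

/-- Two vertices are related if some edge of `S` has them as its endpoints. -/
def rel (G : Multigraph) (S : Finset G.E) (v w : G.V) : Prop :=
  ∃ e ∈ S, G.ends e = s(v, w)

/-- `ω(S)`: the number of connected components of the spanning subgraph `(V(G), S)`. -/
noncomputable def omega (G : Multigraph) (S : Finset G.E) : ℕ :=
  Nat.card (Quotient (Relation.EqvGen.setoid (G.rel S)))

/-- `ω(G)`: the number of connected components of `G`. -/
noncomputable def omegaG (G : Multigraph) : ℕ :=
  G.omega Finset.univ

/-- The Negami polynomial `f(G;t,x,y)`. -/
noncomputable def negami (G : Multigraph) (t x y : ℝ) : ℝ :=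
  ∑ S : Finset G.E, t ^ G.omega S * x ^ S.card * y ^ (Fintype.card G.E - S.card)

/-- The Tutte polynomial `T(G;x,y)`. -/
noncomputable def tutte (G : Multigraph) (x y : ℝ) : ℝ :=
  ∑ S : Finset G.E,
    (x - 1) ^ (G.omega S - G.omegaG) *
      (y - 1) ^ (G.omega S + S.card - Fintype.card G.V)

end Multigraph

/-- The setoid on `V` extending a setoid `A` on the subset `U`: its nontrivial
classes are exactly the blocks of `A`. -/
def extendSetoid {V : Type} (U : Set V) (A : Setoid U) : Setoid V where
  r v w := v = w ∨ ∃ (hv : v ∈ U) (hw : w ∈ U), A.r ⟨v, hv⟩ ⟨w, hw⟩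
  iseqv := by
    constructor
    · exact fun v => Or.inl rfl
    · rintro v w (rfl | ⟨hv, hw, h⟩)
      · exact Or.inl rfl
      · exact Or.inr ⟨hw, hv, A.symm h⟩
    · rintro v w z (rfl | ⟨hv, hw, h⟩) (rfl | ⟨hw', hz, h'⟩)
      · exact Or.inl rfl
      · exact Or.inr ⟨hw', hz, h'⟩
      · exact Or.inr ⟨hv, hw, h⟩
      · exact Or.inr ⟨hv, hz, A.trans h h'⟩

namespace Multigraph

/-- The contraction `K/A` of a multigraph `K` by a partition `A` of a subset `U` of
its vertices: all vertices in a common block of `A` are identified. -/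
noncomputable def contract (K : Multigraph) {U : Set K.V} (A : Setoid U) : Multigraph where
  V := Quotient (extendSetoid U A)
  E := K.E
  finV := Fintype.ofFinite _
  finE := K.finE
  ends e := (K.ends e).map (Quotient.mk (extendSetoid U A))

/-- `P(S)`: the partition of `U` in which two vertices lie in the same block iff they
lie in the same connected component of the spanning subgraph `(V(K), S)`. -/
def part (K : Multigraph) (U : Set K.V) (S : Finset K.E) : Setoid U :=
  Setoid.comap Subtype.val (Relation.EqvGen.setoid (K.rel S))

/-- The auxiliary Negami polynomial `f_A(K;t,x,y)`. -/
noncomputable def negamiAux (K : Multigraph) (U : Set K.V) (A : Setoid U) (t x y : ℝ) : ℝ :=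
  ∑ S : Finset K.E,
    if K.part U S = A then
      t ^ (K.omega S - Nat.card (Quotient A)) * x ^ S.card *
        y ^ (Fintype.card K.E - S.card)
    else 0

/-- The auxiliary Tutte polynomial `T_A(K;x,y)`. -/
noncomputable def tutteAux (K : Multigraph) (U : Set K.V) (A : Setoid U) (x y : ℝ) : ℝ :=
  ∑ S : Finset K.E,
    if K.part U S = A then
      (x - 1) ^ (K.omega S - Nat.card (Quotient A)) *
        (y - 1) ^ (K.omega S + S.card - Fintype.card K.V)
    else 0

end Multigraph

/-- The set of partitions of a finite type is finite. -/
instance setoidFinite {α : Type} [Finite α] : Finite (Setoid α) :=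
  Finite.of_injective (fun s : Setoid α => s.r) fun a b h => by
    cases a; cases b; simp only at h; subst h; rfl

noncomputable instance setoidFintype {α : Type} [Finite α] : Fintype (Setoid α) :=
  Fintype.ofFinite _

/-- The number of blocks `|A|` of a partition (setoid) `A`. -/
noncomputable def nblocks {α : Type} (A : Setoid α) : ℕ :=
  Nat.card (Quotient A)

/-- The matrix `T_n(t)` indexed by partitions of `α`, with `(A,B)`-entry
`t^{|A∧B|}` where `A∧B` is the finest common coarsening (the join `A ⊔ B`). -/
noncomputable def Tmat (α : Type) [Finite α] (t : ℝ) :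
    Matrix (Setoid α) (Setoid α) ℝ :=
  Matrix.of fun A B => t ^ nblocks (A ⊔ B)

/-- The matrix `L_n(x)` indexed by partitions of `α`, with `(A,B)`-entry
`(x-1)^{|A∧B|-1}` if `|A∧B| + n = |A| + |B|` and `0` otherwise. -/
noncomputable def Lmat (α : Type) [Finite α] (n : ℕ) (x : ℝ) :
    Matrix (Setoid α) (Setoid α) ℝ :=
  Matrix.of fun A B =>
    if nblocks (A ⊔ B) + n = nblocks A + nblocks B then
      (x - 1) ^ (nblocks (A ⊔ B) - 1)
    else 0

/-- The connectivity matrix `A_n` indexed by partitions of `α`, with `(A,B)`-entry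
`1` if `|A∧B| = 1` and `0` otherwise. -/
noncomputable def Amat (α : Type) [Finite α] :
    Matrix (Setoid α) (Setoid α) ℝ :=
  Matrix.of fun A B => if nblocks (A ⊔ B) = 1 then (1 : ℝ) else 0

/-- `G` is an `n`-sum of `K` and `H` along `U`: `V(G) = V(K) ∪ V(H)`,
`V(K) ∩ V(H) = U`, and `E(G)` is the disjoint union of `E(K)` and `E(H)` with the
inherited endpoint maps. -/
structure NSum (G K H : Multigraph) (U : Set G.V) where
  ιK : K.V → G.V
  ιH : H.V → G.V
  injK : Function.Injective ιK
  injH : Function.Injective ιH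
  cover : Set.range ιK ∪ Set.range ιH = Set.univ
  inter : Set.range ιK ∩ Set.range ιH = U
  edgeEquiv : G.E ≃ K.E ⊕ H.E
  endsK : ∀ a, G.ends (edgeEquiv.symm (Sum.inl a)) = (K.ends a).map ιK
  endsH : ∀ a, G.ends (edgeEquiv.symm (Sum.inr a)) = (H.ends a).map ιH

namespace NSum

variable {G K H : Multigraph} {U : Set G.V}

/-- The copy of a partition `A` of `U` on the corresponding subset of `V(K)`. -/
def pullK (σ : NSum G K H U) (A : Setoid U) : Setoid (σ.ιK ⁻¹' U : Set K.V) :=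
  Setoid.comap (fun v => ⟨σ.ιK v.1, v.2⟩) A

/-- The copy of a partition `A` of `U` on the corresponding subset of `V(H)`. -/
def pullH (σ : NSum G K H U) (A : Setoid U) : Setoid (σ.ιH ⁻¹' U : Set H.V) :=
  Setoid.comap (fun v => ⟨σ.ιH v.1, v.2⟩) A

/-- The contraction `K/A` for a partition `A` of the common vertex set `U`. -/
noncomputable def contractK (σ : NSum G K H U) (A : Setoid U) : Multigraph :=
  K.contract (σ.pullK A)

/-- The contraction `H/B` for a partition `B` of the common vertex set `U`. -/
noncomputable def contractH (σ : NSum G K H U) (B : Setoid U) : Multigraph :=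
  H.contract (σ.pullH B)

end NSum

/-!
The `(A, B)`-entry of `A_n` is `[A ⊔ B = ⊤]`. With `ζ` the zeta matrix of the partition lattice
and `μ(C) = μ(C, ⊤) = (-1)^{|C|-1} (|C|-1)!`, the Möbius identity `∑_{C ≥ X} μ(C) = [X = ⊤]`
gives `A_n = ζ · diag(μ) · ζᵀ`. Here `ζ` is unitriangular along a linear extension and `μ` never
vanishes, so `A_n` is invertible. The Möbius identity is the coefficient of `X` in the polynomial
identity `∑_E (X)_{|E|} = X^n`, which counts the maps into an `m`-set by their kernels.
-/

open Polynomial Finset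

theorem Polynomial.coeff_one_descPochhammer_succ {R : Type*} [CommRing R] (k : ℕ) :
    (descPochhammer R (k + 1)).coeff 1 = (-1) ^ k * k.factorial := by
  induction k with
  | zero => simp [descPochhammer_one]
  | succ k ih =>
    have h₀ : (descPochhammer R (k + 1)).coeff 0 = 0 := by
      rw [coeff_zero_eq_eval_zero, descPochhammer_ne_zero_eval_zero R k.succ_ne_zero]
    rw [descPochhammer_succ_right, ← C_eq_natCast, mul_sub, coeff_sub, coeff_mul_X, h₀,
      coeff_mul_C, ih, Nat.factorial_succ]
    push_cast
    ring

def Setoid.kerEqEquivEmbedding {β γ : Type*} (E : Setoid β) :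
    {f : β → γ // Setoid.ker f = E} ≃ (Quotient E ↪ γ) where
  toFun f := ⟨Quotient.lift f.1 (fun _ _ h => by rwa [← f.2] at h),
    Quotient.ind₂ fun _ _ h => Quotient.sound (by rw [← f.2]; exact h)⟩
  invFun g := ⟨g ∘ Quotient.mk E, Setoid.ext fun _ _ => g.injective.eq_iff.trans Quotient.eq⟩
  left_inv _ := rfl
  right_inv g := DFunLike.ext _ _ (Quotient.ind fun _ => rfl)

theorem Setoid.sum_descFactorial_card_quotient (β : Type) [Fintype β] (m : ℕ) :
    ∑ E : Setoid β, m.descFactorial (Nat.card (Quotient E)) = m ^ Fintype.card β := by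
  calc ∑ E : Setoid β, m.descFactorial (Nat.card (Quotient E))
      = ∑ E : Setoid β, Fintype.card {f : β → Fin m // Setoid.ker f = E} := by
        refine sum_congr rfl fun E _ => ?_
        rw [Fintype.card_congr E.kerEqEquivEmbedding, Fintype.card_embedding_eq,
          Fintype.card_fin, Nat.card_eq_fintype_card]
    _ = Fintype.card (β → Fin m) :=
        Fintype.card_sigma.symm.trans (Fintype.card_congr (Equiv.sigmaFiberEquiv _))
    _ = m ^ Fintype.card β := by simp

theorem Setoid.sum_descPochhammer_card_quotient (R : Type*) [CommRing R] [IsDomain R]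
    [CharZero R] (β : Type) [Fintype β] :
    ∑ E : Setoid β, descPochhammer R (Nat.card (Quotient E)) = X ^ Fintype.card β := by
  rw [← sub_eq_zero]
  refine eq_zero_of_infinite_isRoot _ (Set.infinite_range_of_injective Nat.cast_injective
    |>.mono ?_)
  rintro _ ⟨m, rfl⟩
  simp only [Set.mem_ofPred_eq, IsRoot.def, eval_sub, eval_finsetSum, eval_pow, eval_X,
    descPochhammer_eval_eq_descFactorial, sub_eq_zero]
  exact_mod_cast Setoid.sum_descFactorial_card_quotient β m

theorem nblocks_pos {α : Type} [Finite α] [Nonempty α] (E : Setoid α) : 0 < nblocks E :=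
  Nat.card_pos_iff.2 ⟨⟨⟦Classical.arbitrary α⟧⟩, inferInstance⟩

theorem nblocks_eq_one_iff {α : Type} [Nonempty α] {E : Setoid α} : nblocks E = 1 ↔ E = ⊤ := by
  rw [nblocks, Nat.card_eq_one_iff_unique, ← Quotient.subsingleton_iff]
  exact and_iff_left ⟨⟦Classical.arbitrary α⟧⟩

theorem nblocks_correspondence {α : Type} (C : Setoid α) (D : {D : Setoid α // C ≤ D}) :
    nblocks (Setoid.correspondence C D) = nblocks D.1 := by
  have h : Setoid.correspondence C D = Setoid.ker (Quot.mapRight D.2) :=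
    Setoid.ext (Quotient.ind₂ fun a b =>
      show D.1 a b ↔ (⟦a⟧ : Quotient D.1) = ⟦b⟧ from Quotient.eq.symm)
  rw [nblocks, nblocks, h]
  exact Nat.card_congr (Setoid.quotientQuotientEquivQuotient C D.1 D.2)

/-- The value `μ(E, ⊤)` of the Möbius function of the partition lattice. -/
noncomputable def moebiusTop (R : Type*) [Ring R] {α : Type} (E : Setoid α) : R :=
  (-1) ^ (nblocks E - 1) * (nblocks E - 1).factorial

theorem moebiusTop_ne_zero (R : Type*) [Ring R] [NoZeroDivisors R] [CharZero R] {α : Type}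
    (E : Setoid α) : moebiusTop R E ≠ 0 :=
  mul_ne_zero (pow_ne_zero _ (neg_ne_zero.2 one_ne_zero))
    (Nat.cast_ne_zero.2 (Nat.factorial_ne_zero _))

theorem sum_moebiusTop (R : Type*) [CommRing R] [IsDomain R] [CharZero R]
    (β : Type) [Finite β] [Nonempty β] :
    ∑ E : Setoid β, moebiusTop R E = if Nat.card β = 1 then 1 else 0 := by
  have := Fintype.ofFinite β
  have h := congrArg (coeff · 1) (Setoid.sum_descPochhammer_card_quotient R β)
  simp only [finsetSum_coeff, coeff_X_pow, eq_comm (a := 1)] at h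
  rw [Nat.card_eq_fintype_card, ← h]
  refine sum_congr rfl fun E _ => ?_
  obtain ⟨k, hk⟩ := Nat.exists_eq_add_of_lt (nblocks_pos E)
  rw [moebiusTop, ← nblocks, hk, zero_add, coeff_one_descPochhammer_succ, Nat.add_sub_cancel]

theorem sum_moebiusTop_of_le (R : Type*) [CommRing R] [IsDomain R] [CharZero R]
    {α : Type} [Finite α] [Nonempty α] (C : Setoid α) :
    ∑ D with C ≤ D, moebiusTop R D = if C = ⊤ then 1 else 0 := by
  have : Nonempty (Quotient C) := ⟨⟦Classical.arbitrary α⟧⟩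
  rw [sum_subtype _ (p := (C ≤ ·)) (fun _ => mem_filter_univ _),
    Fintype.sum_equiv (Setoid.correspondence C).toEquiv _ (moebiusTop R)
      fun D => by rw [moebiusTop, ← nblocks_correspondence C D]; rfl, sum_moebiusTop]
  exact if_congr nblocks_eq_one_iff rfl rfl

namespace Matrix

def zeta (P R : Type*) [LE P] [DecidableLE P] [Zero R] [One R] : Matrix P P R :=
  of fun a b => if a ≤ b then 1 else 0

def joinTop (P R : Type*) [Max P] [Top P] [DecidableEq P] [Zero R] [One R] : Matrix P P R :=
  of fun a b => if a ⊔ b = ⊤ then 1 else 0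

variable (P R : Type*) [Fintype P] [CommRing R]

theorem det_zeta [PartialOrder P] [DecidableEq P] [DecidableLE P] : (zeta P R).det = 1 := by
  let : Fintype (LinearExtension P) := ‹Fintype P›
  let : DecidableEq (LinearExtension P) := ‹DecidableEq P›
  let e : P ≃ LinearExtension P := Equiv.refl P
  rw [← det_submatrix_equiv_self e.symm, det_of_isUpperTriangular]
  · simp [zeta]
  · intro i j hji
    exact if_neg fun hle => ((toLinearExtension (α := P)).monotone hle).not_gt hji

theorem isUnit_zeta [PartialOrder P] [DecidableEq P] [DecidableLE P] : IsUnit (zeta P R) := by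
  rw [isUnit_iff_isUnit_det, det_zeta]
  exact isUnit_one

variable {P R}

theorem zeta_mul_diagonal_mul_zeta_transpose_apply [SemilatticeSup P] [DecidableEq P]
    [DecidableLE P] (d : P → R) (a b : P) :
    (zeta P R * diagonal d * (zeta P R)ᵀ) a b = ∑ c with a ⊔ b ≤ c, d c := by
  rw [mul_apply, sum_filter]
  refine sum_congr rfl fun c _ => ?_
  simp only [mul_diagonal, zeta, of_apply, transpose_apply, sup_le_iff]
  split_ifs <;> simp_all

theorem joinTop_eq_zeta_mul_diagonal_mul_zeta_transpose [SemilatticeSup P] [OrderTop P]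
    [DecidableEq P] [DecidableLE P] (d : P → R)
    (hd : ∀ a, ∑ c with a ≤ c, d c = if a = ⊤ then 1 else 0) :
    joinTop P R = zeta P R * diagonal d * (zeta P R)ᵀ := by
  ext a b
  exact ((zeta_mul_diagonal_mul_zeta_transpose_apply d a b).trans (hd _)).symm

theorem isUnit_joinTop [SemilatticeSup P] [OrderTop P] [DecidableEq P] [DecidableLE P]
    (d : P → R) (hd : ∀ a, ∑ c with a ≤ c, d c = if a = ⊤ then 1 else 0)
    (hunit : ∀ c, IsUnit (d c)) : IsUnit (joinTop P R) := by
  rw [joinTop_eq_zeta_mul_diagonal_mul_zeta_transpose d hd]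
  exact ((isUnit_zeta P R).mul (isUnit_diagonal.2 (Pi.isUnit_iff.2 hunit))).mul
    ((isUnit_transpose _).2 (isUnit_zeta P R))

end Matrix

theorem Amat_eq_joinTop (U : Type) [Finite U] [Nonempty U] :
    Amat U = Matrix.joinTop (Setoid U) ℝ :=
  Matrix.ext fun _ _ => if_congr nblocks_eq_one_iff rfl rfl

/-- the connectivity matrix `A_n` is invertible for every `n ≥ 1`. -/
theorem Amat_invertible
    (U : Type) [Fintype U] (n : ℕ) (hn : 1 ≤ n) (hcard : Fintype.card U = n) :
    IsUnit (Amat U) := by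
  have : Nonempty U := Fintype.card_pos_iff.mp (hcard ▸ hn)
  rw [Amat_eq_joinTop]
  exact Matrix.isUnit_joinTop (moebiusTop ℝ) (sum_moebiusTop_of_le ℝ)
    fun C => (moebiusTop_ne_zero ℝ C).isUnit
end

section
/- Let G be an n-sum of multigraphs K and H along an n-element vertex set U (n ≥ 1), and let t, x, y be real numbers. Then f(G;t,x,y) = Σ_{A ∈ Γ(U)} f_A(K;t,x,y) · f(H/A;t,x,y). -/
attribute [local instance] Classical.propDecidable

/-! Write an edge set of `G` as `P ∪ Q` with `P ⊆ E(K)`, `Q ⊆ E(H)`, and let `A` be the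
partition of `U` cut out by the components of `(V(K), P)`. Contract those components inside
`V(G)` first: the vertices of `H/A` embed into the resulting quotient, and the edges of `Q` only
glue classes in that image. Counting classes across each of these injections gives
`ω_G(P ∪ Q) + |A| = ω_K(P) + ω_{H/A}(Q)`, so the summand of `f(G)` at `P ∪ Q` is the summand of
`f_A(K)` at `P` times that of `f(H/A)` at `Q`. As `A` is determined by `P`, summing over `P` and
`Q` gives the expansion. -/

open Function Relation

namespace Setoid

variable {α β : Type*}

theorem map_eqvGen (r : α → α → Prop) (f : α → β) :
    (EqvGen.setoid r).map f = EqvGen.setoid (Relation.Map r f f) := by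
  refine le_antisymm (eqvGen_le ?_) (eqvGen_mono ?_)
  · rintro _ _ ⟨a, b, h, rfl, rfl⟩
    exact eqvGen_le (s := (EqvGen.setoid (Relation.Map r f f)).comap f)
      (fun a b h => EqvGen.rel _ _ ⟨a, b, h, rfl, rfl⟩) h
  · rintro _ _ ⟨a, b, h, rfl, rfl⟩
    exact ⟨a, b, EqvGen.rel _ _ h, rfl, rfl⟩

theorem map_apply_iff_of_injective {f : α → β} (hf : Injective f) (r : Setoid α) (y y' : β) :
    r.map f y y' ↔ Relation.Map r f f y y' ∨ y = y' := by
  rw [coe_map_of_ker_le r f ((ker_eq_bot_iff.2 hf).symm ▸ bot_le)]; rfl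

theorem card_quotient_comap_le [Finite β] (f : α → β) (r : Setoid β) :
    Nat.card (Quotient (r.comap f)) ≤ Nat.card (Quotient r) := by
  rw [Nat.card_congr (comapQuotientEquiv f r)]
  exact Finite.card_subtype_le _

theorem card_quotient_comap_of_surjective {f : α → β} (hf : Surjective f) (r : Setoid β) :
    Nat.card (Quotient (r.comap f)) = Nat.card (Quotient r) := by
  rw [Nat.card_congr (comapQuotientEquiv f r), (Quotient.mk''_surjective.comp hf).range_eq,
    Nat.card_univ]

/-- Pushing `r` forward along an injection glues nothing outside the image, so the classes of
`r.map f` are those of `r` together with the singletons off the range of `f`. -/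
theorem card_quotient_map_add_card [Finite β] {f : α → β} (hf : Injective f) (r : Setoid α) :
    Nat.card (Quotient (r.map f)) + Nat.card α = Nat.card (Quotient r) + Nat.card β := by
  have : Finite α := Finite.of_injective f hf
  have hdiag : ∀ a b, r.map f (f a) (f b) ↔ r a b :=
    Setoid.ext_iff.1 (comap_map_eq f r hf)
  let toQuot : Quotient r ⊕ {y // y ∉ Set.range f} → Quotient (r.map f) :=
    Sum.elim (Quotient.lift (fun a => ⟦f a⟧) fun a b h => Quotient.sound ((hdiag a b).2 h))
      fun y => ⟦y.1⟧
  have hbij : Bijective toQuot := by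
    refine ⟨?_, ?_⟩
    · rintro (a | ⟨y, hy⟩) (b | ⟨y', hy'⟩) h
      · induction a using Quotient.ind; induction b using Quotient.ind
        exact congrArg Sum.inl (Quotient.sound ((hdiag _ _).1 (Quotient.exact h)))
      · induction a using Quotient.ind with | _ a
        rcases (map_apply_iff_of_injective hf r _ _).1 (Quotient.exact h) with
          ⟨_, b, _, _, rfl⟩ | rfl
        exacts [(hy' ⟨b, rfl⟩).elim, (hy' ⟨a, rfl⟩).elim]
      · induction b using Quotient.ind
        rcases (map_apply_iff_of_injective hf r _ _).1 (Quotient.exact h) with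
          ⟨b, _, _, rfl, _⟩ | rfl
        exacts [(hy ⟨b, rfl⟩).elim, (hy ⟨_, rfl⟩).elim]
      · rcases (map_apply_iff_of_injective hf r _ _).1 (Quotient.exact h) with
          ⟨b, _, _, rfl, _⟩ | rfl
        exacts [(hy ⟨b, rfl⟩).elim, rfl]
    · rintro ⟨y⟩
      by_cases hy : y ∈ Set.range f
      · obtain ⟨a, rfl⟩ := hy
        exact ⟨Sum.inl ⟦a⟧, rfl⟩
      · exact ⟨Sum.inr ⟨y, hy⟩, rfl⟩
  rw [← Nat.card_congr (Equiv.ofBijective _ hbij), Nat.card_sum, add_assoc,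
    ← Nat.card_range_of_injective hf, add_comm (Nat.card {y // y ∉ Set.range f}),
    ← Nat.card_sum, Nat.card_congr (Equiv.sumCompl (· ∈ Set.range f))]

theorem card_quotient_sup_eqvGen (r : Setoid α) (s : α → α → Prop) :
    Nat.card (Quotient (r ⊔ EqvGen.setoid s)) =
      Nat.card (Quotient (EqvGen.setoid (Relation.Map s (Quotient.mk r) (Quotient.mk r)))) := by
  set t := EqvGen.setoid (Relation.Map s (Quotient.mk r) (Quotient.mk r))
  have hle : r ⊔ EqvGen.setoid s ≤ t.comap (Quotient.mk r) :=
    sup_le (fun a b h => by rw [comap_rel, Quotient.sound h])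
      (eqvGen_le fun a b h => EqvGen.rel _ _ ⟨a, b, h, rfl, rfl⟩)
  let toSup : Quotient r → Quotient (r ⊔ EqvGen.setoid s) :=
    Quotient.lift (fun a => ⟦a⟧) fun a b h => Quotient.sound (le_sup_left (a := r) h)
  have hker : t ≤ ker toSup := eqvGen_le <| by
    rintro _ _ ⟨a, b, h, rfl, rfl⟩
    exact Quotient.sound (le_sup_right (a := r) (EqvGen.rel _ _ h))
  exact Nat.card_congr
    { toFun := Quotient.lift (fun a => (⟦⟦a⟧⟧ : Quotient t)) fun _ _ h => Quotient.sound (hle h)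
      invFun := Quotient.lift toSup fun _ _ h => hker h
      left_inv := fun x => Quotient.inductionOn x fun _ => rfl
      right_inv := fun x =>
        Quotient.inductionOn x fun y => Quotient.inductionOn y fun _ => rfl }

end Setoid

theorem Set.restrictPreimage_bijective_of_subset_range {α β : Type*} {f : α → β} {t : Set β}
    (hf : Injective f) (ht : t ⊆ Set.range f) : Bijective (t.restrictPreimage f) := by
  refine ⟨hf.restrictPreimage t, fun u => ?_⟩
  obtain ⟨a, ha⟩ := ht u.2
  exact ⟨⟨a, by rw [Set.mem_preimage, ha]; exact u.2⟩, Subtype.ext ha⟩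

namespace Multigraph

theorem exists_mem_map_ends_eq_iff (G : Multigraph) {β : Type*} (f : G.V → β) (S : Finset G.E)
    (b c : β) : (∃ e ∈ S, (G.ends e).map f = s(b, c)) ↔ Relation.Map (G.rel S) f f b c := by
  constructor
  · rintro ⟨e, he, hbc⟩
    obtain ⟨p, q, hpq⟩ : ∃ p q, G.ends e = s(p, q) := Sym2.exists.1 ⟨_, rfl⟩
    rw [hpq, Sym2.map_mk, Sym2.eq_iff] at hbc
    rcases hbc with ⟨rfl, rfl⟩ | ⟨rfl, rfl⟩
    exacts [⟨p, q, ⟨e, he, hpq⟩, rfl, rfl⟩, ⟨q, p, ⟨e, he, hpq.trans Sym2.eq_swap⟩, rfl, rfl⟩]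
  · rintro ⟨p, q, ⟨e, he, hpq⟩, rfl, rfl⟩
    exact ⟨e, he, by rw [hpq, Sym2.map_mk]⟩

theorem rel_contract (K : Multigraph) {U : Set K.V} (A : Setoid U) (S : Finset K.E) :
    (K.contract A).rel S = Relation.Map (K.rel S) (Quotient.mk _) (Quotient.mk _) := by
  ext b c
  exact K.exists_mem_map_ends_eq_iff _ S b c

end Multigraph

theorem extendSetoid_eq_map {V : Type} (U : Set V) (A : Setoid U) :
    extendSetoid U A = A.map Subtype.val := by
  refine Setoid.ext fun v w => ?_
  rw [Setoid.map_apply_iff_of_injective Subtype.val_injective]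
  constructor
  · rintro (rfl | ⟨hv, hw, h⟩)
    exacts [Or.inr rfl, Or.inl ⟨⟨v, hv⟩, ⟨w, hw⟩, h, rfl, rfl⟩]
  · rintro (⟨⟨v, hv⟩, ⟨w, hw⟩, h, rfl, rfl⟩ | rfl)
    exacts [Or.inr ⟨hv, hw, h⟩, Or.inl rfl]

namespace NSum

variable {G K H : Multigraph} {U : Set G.V}

theorem card_edges (sg : NSum G K H U) :
    Fintype.card G.E = Fintype.card K.E + Fintype.card H.E := by
  rw [Fintype.card_congr sg.edgeEquiv, Fintype.card_sum]

theorem card_V_add_card (sg : NSum G K H U) :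
    Nat.card G.V + Nat.card U = Nat.card K.V + Nat.card H.V := by
  have h := Set.ncard_union_add_ncard_inter (Set.range sg.ιK) (Set.range sg.ιH)
  rwa [sg.cover, sg.inter, Set.ncard_univ, Set.ncard_range_of_injective sg.injK,
    Set.ncard_range_of_injective sg.injH, ← Nat.card_coe_set_eq] at h

variable (sg : NSum G K H U)

def splitEdges : Finset G.E ≃ Finset K.E × Finset H.E :=
  sg.edgeEquiv.finsetCongr.trans Finset.sumEquiv.toEquiv

theorem card_splitEdges_symm (P : Finset K.E) (Q : Finset H.E) :
    (sg.splitEdges.symm (P, Q)).card = P.card + Q.card := by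
  simp [splitEdges, Finset.card_disjSum]

theorem rel_splitEdges_symm (P : Finset K.E) (Q : Finset H.E) :
    G.rel (sg.splitEdges.symm (P, Q)) =
      Relation.Map (K.rel P) sg.ιK sg.ιK ⊔ Relation.Map (H.rel Q) sg.ιH sg.ιH := by
  ext v w
  rw [Pi.sup_apply, Pi.sup_apply, ← K.exists_mem_map_ends_eq_iff,
    ← H.exists_mem_map_ends_eq_iff]
  simp only [Multigraph.rel, ← sg.endsK, ← sg.endsH]
  rw [sg.edgeEquiv.exists_congr_left]
  simp [splitEdges, Sum.exists]

theorem subset_range_ιK : U ⊆ Set.range sg.ιK := fun _ hu => (sg.inter.ge hu).1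

theorem subset_range_ιH : U ⊆ Set.range sg.ιH := fun _ hu => (sg.inter.ge hu).2

theorem card_quotient_pullK (A : Setoid U) :
    Nat.card (Quotient (sg.pullK A)) = Nat.card (Quotient A) :=
  Setoid.card_quotient_comap_of_surjective
    (Set.restrictPreimage_bijective_of_subset_range sg.injK sg.subset_range_ιK).2 A

theorem card_quotient_pullH (A : Setoid U) :
    Nat.card (Quotient (sg.pullH A)) = Nat.card (Quotient A) :=
  Setoid.card_quotient_comap_of_surjective
    (Set.restrictPreimage_bijective_of_subset_range sg.injH sg.subset_range_ιH).2 A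

theorem card_preimage_ιH : Nat.card (sg.ιH ⁻¹' U) = Nat.card U :=
  Nat.card_congr <| .ofBijective _ <|
    Set.restrictPreimage_bijective_of_subset_range sg.injH sg.subset_range_ιH

theorem card_V_contractH_add_card (A : Setoid U) :
    Nat.card (sg.contractH A).V + Nat.card U = Nat.card (Quotient A) + Nat.card H.V := by
  have h := Setoid.card_quotient_map_add_card Subtype.val_injective (sg.pullH A)
  rwa [← extendSetoid_eq_map, card_quotient_pullH, card_preimage_ιH] at h

def connK (P : Finset K.E) : Setoid G.V := (EqvGen.setoid (K.rel P)).map sg.ιK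

def partU (P : Finset K.E) : Setoid U := (sg.connK P).comap (↑)

theorem eqvGen_rel_splitEdges_symm (P : Finset K.E) (Q : Finset H.E) :
    EqvGen.setoid (G.rel (sg.splitEdges.symm (P, Q))) =
      sg.connK P ⊔ EqvGen.setoid (Relation.Map (H.rel Q) sg.ιH sg.ιH) := by
  rw [rel_splitEdges_symm, Setoid.gi.gc.l_sup, connK, Setoid.map_eqvGen]

theorem part_eq_pullK_partU (P : Finset K.E) :
    K.part (sg.ιK ⁻¹' U) P = sg.pullK (sg.partU P) := by
  rw [Multigraph.part, ← Setoid.comap_map_eq sg.ιK (EqvGen.setoid (K.rel P)) sg.injK]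
  rfl

theorem part_eq_pullK_iff {P : Finset K.E} {A : Setoid U} :
    K.part (sg.ιK ⁻¹' U) P = sg.pullK A ↔ sg.partU P = A := by
  rw [part_eq_pullK_partU]
  exact (Setoid.comap_injective _
    (Set.restrictPreimage_bijective_of_subset_range sg.injK sg.subset_range_ιK).2).eq_iff

theorem comap_ιH_connK (P : Finset K.E) :
    (sg.connK P).comap sg.ιH = extendSetoid (sg.ιH ⁻¹' U) (sg.pullH (sg.partU P)) := by
  refine Setoid.ext fun v w => ⟨fun h => ?_, ?_⟩
  · rcases (Setoid.map_apply_iff_of_injective sg.injK _ _ _).1 h with ⟨p, q, -, hp, hq⟩ | hvw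
    · exact Or.inr ⟨sg.inter.le ⟨⟨p, hp⟩, v, rfl⟩, sg.inter.le ⟨⟨q, hq⟩, w, rfl⟩, h⟩
    · exact Or.inl (sg.injH hvw)
  · rintro (rfl | ⟨_, _, h⟩)
    · exact Setoid.refl' _ v
    · exact h

def contractHToQuotient (P : Finset K.E) :
    (sg.contractH (sg.partU P)).V → Quotient (sg.connK P) :=
  Quotient.lift (fun v => ⟦sg.ιH v⟧) fun v w h =>
    Quotient.sound ((Setoid.ext_iff.1 (sg.comap_ιH_connK P) v w).2 h)

theorem contractHToQuotient_injective (P : Finset K.E) :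
    Injective (sg.contractHToQuotient P) := by
  rintro ⟨v⟩ ⟨w⟩ h
  have h' : (⟦sg.ιH v⟧ : Quotient (sg.connK P)) = ⟦sg.ιH w⟧ := h
  exact Quotient.sound ((Setoid.ext_iff.1 (sg.comap_ιH_connK P) v w).1
    (Quotient.exact h' : sg.connK P (sg.ιH v) (sg.ιH w)))

/-- The components of `G` arise by contracting `connK P` first and then the edges of `Q`, which
all join classes in the image of `H/A`. -/
theorem omega_splitEdges_symm_eq (P : Finset K.E) (Q : Finset H.E) :
    G.omega (sg.splitEdges.symm (P, Q)) = Nat.card (Quotient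
      ((EqvGen.setoid ((sg.contractH (sg.partU P)).rel Q)).map (sg.contractHToQuotient P))) := by
  have hrel : (sg.contractH (sg.partU P)).rel Q =
      Relation.Map (H.rel Q) (Quotient.mk _) (Quotient.mk _) := H.rel_contract _ Q
  rw [Multigraph.omega, eqvGen_rel_splitEdges_symm, Setoid.card_quotient_sup_eqvGen,
    Setoid.map_eqvGen, hrel, Relation.map_map]
  erw [Relation.map_map]
  rfl

theorem omega_splitEdges_symm_add_card (P : Finset K.E) (Q : Finset H.E) :
    G.omega (sg.splitEdges.symm (P, Q)) + Nat.card (Quotient (sg.partU P)) =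
      K.omega P + (sg.contractH (sg.partU P)).omega Q := by
  have hK : Nat.card (Quotient (sg.connK P)) + Nat.card K.V = K.omega P + Nat.card G.V :=
    Setoid.card_quotient_map_add_card sg.injK _
  have hQ : G.omega (sg.splitEdges.symm (P, Q)) + Nat.card (sg.contractH (sg.partU P)).V =
      (sg.contractH (sg.partU P)).omega Q + Nat.card (Quotient (sg.connK P)) :=
    sg.omega_splitEdges_symm_eq P Q ▸
      Setoid.card_quotient_map_add_card (sg.contractHToQuotient_injective P) _
  have hH := sg.card_V_contractH_add_card (sg.partU P)
  have hV := sg.card_V_add_card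
  omega

theorem card_quotient_partU_le (P : Finset K.E) :
    Nat.card (Quotient (sg.partU P)) ≤ K.omega P := by
  rw [← sg.card_quotient_pullK, ← part_eq_pullK_partU]
  exact Setoid.card_quotient_comap_le _ _

theorem negami_summand_splitEdges_symm (P : Finset K.E) (Q : Finset H.E) (t x y : ℝ) :
    t ^ G.omega (sg.splitEdges.symm (P, Q)) * x ^ (sg.splitEdges.symm (P, Q)).card *
        y ^ (Fintype.card G.E - (sg.splitEdges.symm (P, Q)).card) =
      t ^ (K.omega P - Nat.card (Quotient (sg.pullK (sg.partU P)))) * x ^ P.card *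
          y ^ (Fintype.card K.E - P.card) *
        (t ^ (sg.contractH (sg.partU P)).omega Q * x ^ Q.card *
          y ^ (Fintype.card H.E - Q.card)) := by
  have hω := sg.omega_splitEdges_symm_add_card P Q
  have hle := sg.card_quotient_partU_le P
  have hP := P.card_le_univ
  have hQ := Q.card_le_univ
  rw [sg.card_quotient_pullK, sg.card_splitEdges_symm, sg.card_edges,
    show G.omega _ = K.omega P - Nat.card (Quotient (sg.partU P)) +
      (sg.contractH (sg.partU P)).omega Q by omega,
    show Fintype.card K.E + Fintype.card H.E - (P.card + Q.card) =
      Fintype.card K.E - P.card + (Fintype.card H.E - Q.card) by omega,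
    pow_add, pow_add, pow_add]
  ring

end NSum

theorem negami_aux_expansion_general
    (G K H : Multigraph) (U : Set G.V)
    (sg : NSum G K H U) (t x y : ℝ) :
    G.negami t x y =
      ∑ A : Setoid ↥U,
        K.negamiAux (sg.ιK ⁻¹' U) (sg.pullK A) t x y * (sg.contractH A).negami t x y := by
  rw [Multigraph.negami, ← sg.splitEdges.symm.sum_comp, Fintype.sum_prod_type]
  simp only [Multigraph.negamiAux, Finset.sum_mul, ite_mul, zero_mul, NSum.part_eq_pullK_iff]
  refine (Finset.sum_congr rfl fun P _ => ?_).trans Finset.sum_comm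
  rw [Finset.sum_ite_eq, if_pos (Finset.mem_univ _), Multigraph.negami, Finset.mul_sum]
  exact Finset.sum_congr rfl fun Q _ => sg.negami_summand_splitEdges_symm P Q t x y

/-- `f(G) = Σ_{A ∈ Γ(U)} f_A(K) · f(H/A)` for an `n`-sum. -/
theorem negami_aux_expansion
    (G K H : Multigraph) (U : Set G.V) (n : ℕ) (hn : 1 ≤ n)
    (sg : NSum G K H U) (hU : Nat.card ↥U = n) (t x y : ℝ) :
    G.negami t x y =
      ∑ A : Setoid ↥U,
        K.negamiAux (sg.ιK ⁻¹' U) (sg.pullK A) t x y * (sg.contractH A).negami t x y :=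
  negami_aux_expansion_general G K H U sg t x y
end

section
/- For every multigraph G and all real numbers x, y: f(G; (x−1)(y−1), y−1, 1) = (y−1)^{|V(G)|} · (x−1)^{ω(G)} · T(G;x,y). -/
attribute [local instance] Classical.propDecidable

/-!
Expanding `((x-1)(y-1))^{ω(S)} (y-1)^{|S|}`, the identity holds term by term as soon as both
exponents of the Tutte polynomial are true differences: `ω(G) ≤ ω(S)`, because adding edges
only merges components, and `|V(G)| ≤ ω(S) + |S|`, because each edge merges at most two of them.
-/

namespace Setoid

variable {α : Type*} [Finite α]

theorem card_quotient_le_of_le {s t : Setoid α} (h : s ≤ t) :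
    Nat.card (Quotient t) ≤ Nat.card (Quotient s) :=
  Nat.card_le_card_of_surjective _ (Quotient.map_surjective (f := id) (fun _ _ hab => h hab)
    Function.surjective_id)

theorem card_quotient_eqvGen_le_succ (r : α → α → Prop) (z : Sym2 α) :
    Nat.card (Quotient (Relation.EqvGen.setoid r)) ≤
      Nat.card (Quotient (Relation.EqvGen.setoid fun x y => r x y ∨ z = s(x, y))) + 1 := by
  induction z using Sym2.ind with | _ a b => ?_
  set R := Relation.EqvGen.setoid r
  -- `merge ∘ mk` is constant on the classes of the coarser relation and misses only `⟦b⟧`.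
  let merge : Quotient R → Quotient R := fun q => if q = ⟦b⟧ then ⟦a⟧ else q
  have hmerge : merge ⟦a⟧ = merge ⟦b⟧ := by simp [merge]
  have hker : Relation.EqvGen.setoid (fun x y => r x y ∨ s(a, b) = s(x, y)) ≤
      Setoid.ker (merge ∘ Quotient.mk R) := by
    refine Setoid.eqvGen_le fun x y hxy => ?_
    rcases hxy with hr | hab
    · exact congrArg merge (Quotient.sound (Relation.EqvGen.rel _ _ hr))
    · rcases Sym2.eq_iff.mp hab with ⟨rfl, rfl⟩ | ⟨rfl, rfl⟩
      exacts [hmerge, hmerge.symm]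
  let cover : Option (Quotient _) → Quotient R :=
    Option.elim' ⟦b⟧ (Quotient.lift (merge ∘ Quotient.mk R) hker)
  have hcover : cover.Surjective := by
    refine Quotient.ind fun x => ?_
    by_cases hx : (⟦x⟧ : Quotient R) = ⟦b⟧
    · exact ⟨none, hx.symm⟩
    · exact ⟨some ⟦x⟧, if_neg hx⟩
  simpa only [Finite.card_option] using Nat.card_le_card_of_surjective cover hcover

end Setoid

namespace Multigraph

variable (G : Multigraph)

theorem omega_antitone : Antitone G.omega := fun _ _ h =>
  Setoid.card_quotient_le_of_le (Setoid.eqvGen_mono fun _ _ ⟨e, he, hvw⟩ => ⟨e, h he, hvw⟩)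

theorem omegaG_le_omega (S : Finset G.E) : G.omegaG ≤ G.omega S :=
  G.omega_antitone S.subset_univ

theorem omega_empty : G.omega ∅ = Fintype.card G.V := by
  have hbot : Relation.EqvGen.setoid (G.rel ∅) = ⊥ :=
    le_bot_iff.mp (Setoid.eqvGen_le fun _ _ ⟨_, he, _⟩ => absurd he (Finset.notMem_empty _))
  rw [omega, hbot, Nat.card_congr Setoid.quotientBotEquiv, Nat.card_eq_fintype_card]

theorem rel_insert (S : Finset G.E) (e : G.E) :
    G.rel (insert e S) = fun v w => G.rel S v w ∨ G.ends e = s(v, w) := by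
  ext v w
  simp only [rel, Finset.exists_mem_insert, or_comm]

theorem omega_le_omega_insert_add_one (S : Finset G.E) (e : G.E) :
    G.omega S ≤ G.omega (insert e S) + 1 := by
  rw [omega, omega, rel_insert]
  exact Setoid.card_quotient_eqvGen_le_succ _ _

theorem card_V_le_omega_add_card (S : Finset G.E) : Fintype.card G.V ≤ G.omega S + S.card := by
  induction S using Finset.induction_on with
  | empty => simp [omega_empty]
  | insert e S he ih =>
    rw [Finset.card_insert_of_notMem he]
    linarith [G.omega_le_omega_insert_add_one S e]

end Multigraph

/-- the relation between the Negami and the Tutte polynomials: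
`f(G;(x−1)(y−1), y−1, 1) = (y−1)^{|V(G)|}·(x−1)^{ω(G)}·T(G;x,y)`. -/
theorem negami_tutte_relation (G : Multigraph) (x y : ℝ) :
    G.negami ((x - 1) * (y - 1)) (y - 1) 1 =
      (y - 1) ^ Fintype.card G.V * (x - 1) ^ G.omegaG * G.tutte x y := by
  rw [Multigraph.negami, Multigraph.tutte, Finset.mul_sum]
  refine Finset.sum_congr rfl fun S _ => ?_
  have hx := Nat.add_sub_cancel' (G.omegaG_le_omega S)
  have hy := Nat.add_sub_cancel' (G.card_V_le_omega_add_card S)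
  calc ((x - 1) * (y - 1)) ^ G.omega S * (y - 1) ^ S.card * 1 ^ (Fintype.card G.E - S.card)
      = (x - 1) ^ G.omega S * (y - 1) ^ (G.omega S + S.card) := by
        rw [mul_pow, one_pow, pow_add]; ring
    _ = (x - 1) ^ (G.omegaG + (G.omega S - G.omegaG)) *
          (y - 1) ^ (Fintype.card G.V + (G.omega S + S.card - Fintype.card G.V)) := by
        rw [hx, hy]
    _ = _ := by rw [pow_add, pow_add]; ring
end
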